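/- Let F be a finite field with |F| = q ≥ 2. Under the uniform distribution on tuples (a,b,c,d,k14,k47,k79,k25,k57,k26) ∈ F^10, the probability that the butterfly decoding matrix at sink t2, namely F_{t2} = [[c·k26, (a·k14·k47 + c·k25·k57)·k79], [d·k26, (b·k14·k47 + d·k25·k57)·k79]], is invertible equals (q+1)(q-1)^6/q^7; hence the failure probability of sink t2 is P_e(t2) = 1 − (q+1)(q-1)^6/q^7. -/
import Mathlib


/- The decoding matrix at sink `t₂` of the butterfly network, with source kernel
`K_s = [[a,c],[b,d]]` and local encoding coefficients `k14, k47, k79, k25, k57, k26`. -/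
def Ft2 {F : Type*} [Field F] (a b c d k14 k47 k79 k25 k57 k26 : F) :
    Matrix (Fin 2) (Fin 2) F :=
  !![c * k26, (a * k14 * k47 + c * k25 * k57) * k79;
     d * k26, (b * k14 * k47 + d * k25 * k57) * k79]

open Finset Matrix

section aux

variable {F : Type*} [Field F]

/-- Quadruples `(a,b,c,d)` with `b*c ≠ a*d` correspond to invertible `2×2` matrices. -/
noncomputable def butterflyEGL [DecidableEq F] :
    {x : F × F × F × F // x.2.1 * x.2.2.1 ≠ x.1 * x.2.2.2} ≃ GL (Fin 2) F where
  toFun x := Matrix.GeneralLinearGroup.mkOfDetNeZero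
    !![x.1.2.1, x.1.1; x.1.2.2.2, x.1.2.2.1]
    (by rw [Matrix.det_fin_two_of]; simpa [sub_ne_zero] using x.2)
  invFun g := ⟨((g : Matrix (Fin 2) (Fin 2) F) 0 1, (g : Matrix (Fin 2) (Fin 2) F) 0 0,
      (g : Matrix (Fin 2) (Fin 2) F) 1 1, (g : Matrix (Fin 2) (Fin 2) F) 1 0), by
    have hdet : ((g : Matrix (Fin 2) (Fin 2) F)).det ≠ 0 :=
      isUnit_iff_ne_zero.mp ((Matrix.isUnit_iff_isUnit_det _).mp g.isUnit)
    rw [Matrix.det_fin_two] at hdet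
    simpa [sub_ne_zero] using hdet⟩
  left_inv x := Subtype.ext rfl
  right_inv g := Units.ext (by
    show !![(g : Matrix (Fin 2) (Fin 2) F) 0 0, _; _, _] = (g : Matrix (Fin 2) (Fin 2) F)
    exact (Matrix.eta_fin_two _).symm)

/-- Decomposing a good tuple into independent components. -/
def butterflyEMain :
    {v : Fin 10 → F // (v 1 * v 2 ≠ v 0 * v 3) ∧ v 4 ≠ 0 ∧ v 5 ≠ 0 ∧ v 6 ≠ 0 ∧ v 9 ≠ 0} ≃
    {x : F × F × F × F // x.2.1 * x.2.2.1 ≠ x.1 * x.2.2.2} × {x : F // x ≠ 0} × {x : F // x ≠ 0} ×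
      {x : F // x ≠ 0} × F × F × {x : F // x ≠ 0} where
  toFun v := ⟨⟨(v.1 0, v.1 1, v.1 2, v.1 3), v.2.1⟩, ⟨v.1 4, v.2.2.1⟩, ⟨v.1 5, v.2.2.2.1⟩,
    ⟨v.1 6, v.2.2.2.2.1⟩, v.1 7, v.1 8, ⟨v.1 9, v.2.2.2.2.2⟩⟩
  invFun t := ⟨![t.1.1.1, t.1.1.2.1, t.1.1.2.2.1, t.1.1.2.2.2, t.2.1.1, t.2.2.1.1,
      t.2.2.2.1.1, t.2.2.2.2.1, t.2.2.2.2.2.1, t.2.2.2.2.2.2.1],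
    ⟨t.1.2, t.2.1.2, t.2.2.1.2, t.2.2.2.1.2, t.2.2.2.2.2.2.2⟩⟩
  left_inv v := Subtype.ext (funext fun i => by fin_cases i <;> rfl)
  right_inv t := rfl

end aux

/- STATEMENT 2: over a finite field with `q = |F| ≥ 2`, under the uniform distribution
on tuples `(a,b,c,d,k14,k47,k79,k25,k57,k26) ∈ F^10`, the probability that `F_{t2}` is
invertible is `(q+1)(q-1)^6/q^7`; hence the failure probability of sink `t₂` is
`P_e(t2) = 1 - (q+1)(q-1)^6/q^7`. -/
open Classical in
theorem butterfly_sink_t2_failure_probability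
    (F : Type*) [Field F] [Fintype F] (q : ℕ) (hq : Fintype.card F = q) (hq2 : 2 ≤ q) :
    ((Finset.univ.filter fun v : Fin 10 → F =>
        IsUnit (Ft2 (v 0) (v 1) (v 2) (v 3) (v 4) (v 5) (v 6) (v 7) (v 8) (v 9))).card : ℝ) /
        (q : ℝ) ^ 10 = ((q : ℝ) + 1) * ((q : ℝ) - 1) ^ 6 / (q : ℝ) ^ 7 ∧
    ((Finset.univ.filter fun v : Fin 10 → F =>
        ¬ IsUnit (Ft2 (v 0) (v 1) (v 2) (v 3) (v 4) (v 5) (v 6) (v 7) (v 8) (v 9))).card : ℝ) /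
        (q : ℝ) ^ 10 = 1 - ((q : ℝ) + 1) * ((q : ℝ) - 1) ^ 6 / (q : ℝ) ^ 7 := by
  classical
  have hiff : ∀ v : Fin 10 → F,
      IsUnit (Ft2 (v 0) (v 1) (v 2) (v 3) (v 4) (v 5) (v 6) (v 7) (v 8) (v 9)) ↔
      ((v 1 * v 2 ≠ v 0 * v 3) ∧ v 4 ≠ 0 ∧ v 5 ≠ 0 ∧ v 6 ≠ 0 ∧ v 9 ≠ 0) := by
    intro v
    rw [Matrix.isUnit_iff_isUnit_det, isUnit_iff_ne_zero]
    have hdet : (Ft2 (v 0) (v 1) (v 2) (v 3) (v 4) (v 5) (v 6) (v 7) (v 8) (v 9)).det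
        = v 4 * (v 5 * (v 6 * (v 9 * (v 1 * v 2 - v 0 * v 3)))) := by
      simp only [Ft2, Matrix.det_fin_two_of]
      ring
    rw [hdet]
    simp only [mul_ne_zero_iff, sub_ne_zero]
    tauto
  -- count the good tuples
  have hqGL : Nat.card (GL (Fin 2) F) = (q ^ 2 - q ^ 0) * (q ^ 2 - q ^ 1) := by
    rw [Matrix.card_GL_field, hq]
    simp [Fin.prod_univ_two]
  have hcard : (Finset.univ.filter fun v : Fin 10 → F =>
      IsUnit (Ft2 (v 0) (v 1) (v 2) (v 3) (v 4) (v 5) (v 6) (v 7) (v 8) (v 9))).card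
      = (q ^ 2 - 1) * (q ^ 2 - q) * ((q - 1) * ((q - 1) * ((q - 1) * (q * (q * (q - 1)))))) := by
    rw [← Fintype.card_subtype]
    rw [Fintype.card_congr ((Equiv.subtypeEquivRight hiff).trans
      (butterflyEMain.trans (Equiv.prodCongr butterflyEGL (Equiv.refl _))))]
    rw [Fintype.card_prod, Fintype.card_prod, Fintype.card_prod, Fintype.card_prod,
      Fintype.card_prod, Fintype.card_prod]
    rw [← Nat.card_eq_fintype_card (α := GL (Fin 2) F), hqGL]
    have hne : Fintype.card {x : F // x ≠ 0} = q - 1 := by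
      rw [Fintype.card_congr unitsEquivNeZero.symm, Fintype.card_units, hq]
    rw [hne, hq]
    norm_num
  have h1q : (1 : ℕ) ≤ q := le_trans one_le_two hq2
  have hq0 : (q : ℝ) ≠ 0 := Nat.cast_ne_zero.2 (Nat.one_le_iff_ne_zero.mp h1q)
  have hqq : q ≤ q ^ 2 := Nat.le_self_pow (by norm_num) q
  have h1q2 : (1 : ℕ) ≤ q ^ 2 := Nat.one_le_pow _ _ h1q
  have hcardR : ((Finset.univ.filter fun v : Fin 10 → F =>
      IsUnit (Ft2 (v 0) (v 1) (v 2) (v 3) (v 4) (v 5) (v 6) (v 7) (v 8) (v 9))).card : ℝ)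
      = ((q : ℝ) ^ 2 - 1) * ((q : ℝ) ^ 2 - q) * (((q : ℝ) - 1) * (((q : ℝ) - 1) *
        (((q : ℝ) - 1) * ((q : ℝ) * ((q : ℝ) * ((q : ℝ) - 1)))))) := by
    rw [hcard]
    push_cast [Nat.cast_sub h1q, Nat.cast_sub hqq, Nat.cast_sub h1q2]
    ring
  have hfirst : ((Finset.univ.filter fun v : Fin 10 → F =>
      IsUnit (Ft2 (v 0) (v 1) (v 2) (v 3) (v 4) (v 5) (v 6) (v 7) (v 8) (v 9))).card : ℝ) /
      (q : ℝ) ^ 10 = ((q : ℝ) + 1) * ((q : ℝ) - 1) ^ 6 / (q : ℝ) ^ 7 := by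
    rw [hcardR]
    field_simp
    ring
  refine ⟨hfirst, ?_⟩
  have hcompl : ((Finset.univ.filter fun v : Fin 10 → F =>
      ¬ IsUnit (Ft2 (v 0) (v 1) (v 2) (v 3) (v 4) (v 5) (v 6) (v 7) (v 8) (v 9))).card : ℝ)
      = (q : ℝ) ^ 10 - ((Finset.univ.filter fun v : Fin 10 → F =>
      IsUnit (Ft2 (v 0) (v 1) (v 2) (v 3) (v 4) (v 5) (v 6) (v 7) (v 8) (v 9))).card : ℝ) := by
    have := Finset.card_filter_add_card_filter_not (s := (Finset.univ : Finset (Fin 10 → F)))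
      (p := fun v : Fin 10 → F =>
        IsUnit (Ft2 (v 0) (v 1) (v 2) (v 3) (v 4) (v 5) (v 6) (v 7) (v 8) (v 9)))
    have hcu : (Finset.univ : Finset (Fin 10 → F)).card = q ^ 10 := by
      simp [Fintype.card_fun, hq]
    rw [hcu] at this
    have : ((Finset.univ.filter fun v : Fin 10 → F =>
        IsUnit (Ft2 (v 0) (v 1) (v 2) (v 3) (v 4) (v 5) (v 6) (v 7) (v 8) (v 9))).card : ℝ)
        + ((Finset.univ.filter fun v : Fin 10 → F =>
        ¬ IsUnit (Ft2 (v 0) (v 1) (v 2) (v 3) (v 4) (v 5) (v 6) (v 7) (v 8) (v 9))).card : ℝ)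
        = (q : ℝ) ^ 10 := by
      exact_mod_cast congrArg (fun n : ℕ => (n : ℝ)) this
    linarith
  rw [hcompl, sub_div, hfirst]
  congr 1
  field_simp
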